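/- The momentum-space Hamiltonian is C₃z-covariant: define the index map ρ on ℤ×ℤ×{+1,−1} by ρ(m,n,+1) = (−n−1, m−n, +1) and ρ(m,n,−1) = (−n, m−n+1, −1). Then (i) the vector associated to ρ(Q) equals R applied to the vector associated to Q, for every Q (so the rotation R maps the lattice 𝒬 bijectively to itself preserving the layer index, with R κ₊ = κ₊ − b₁ and R κ₋ = κ₋ + b₂); and (ii) H_{ρQ, ρQ'}(R k) = H_{Q,Q'}(k) for all Q, Q' and all k ∈ ℝ². -/
import Mathlib


open Real Complex

noncomputable section
open scoped Classical

/-- The momentum-space lattice index set ℤ×ℤ×{+1,−1} (layer label in ℤˣ = {1,−1}). -/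
abbrev Idx : Type := ℤ × ℤ × ℤˣ

/-- The first-shell moiré reciprocal vectors b₁ = k_θ(1,0), b₂ = R b₁, b₃ = R b₂. -/
def bv (kθ : ℝ) : Fin 3 → ℝ × ℝ
  | 0 => (kθ, 0)
  | 1 => (-(kθ / 2), kθ * Real.sqrt 3 / 2)
  | 2 => (-(kθ / 2), -(kθ * Real.sqrt 3 / 2))

/-- The moiré scattering vectors q₁ = (k_θ/√3)(0,1), q₂ = R q₁, q₃ = R q₂. -/
def qv (kθ : ℝ) : Fin 3 → ℝ × ℝ
  | 0 => (0, kθ / Real.sqrt 3)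
  | 1 => (-(kθ / 2), -(kθ / (2 * Real.sqrt 3)))
  | 2 => (kθ / 2, -(kθ / (2 * Real.sqrt 3)))

/-- κ₊ = (b₁+q₁)/2 = (k_θ/2, k_θ/(2√3)) and κ₋ = (b₁−q₁)/2 = (k_θ/2, −k_θ/(2√3)). -/
def kappa (kθ : ℝ) (l : ℤˣ) : ℝ × ℝ := (kθ / 2, ((l : ℤ) : ℝ) * (kθ / (2 * Real.sqrt 3)))

/-- The vector in ℝ² associated to an index (m,n,l): Q(m,n,l) = m b₁ + n b₂ + κ_l. -/
def vecOf (kθ : ℝ) (Q : Idx) : ℝ × ℝ :=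
  ((Q.1 : ℝ)) • bv kθ 0 + ((Q.2.1 : ℝ)) • bv kθ 1 + kappa kθ Q.2.2

/-- The layer index ζ_Q = ±1. -/
def zetaOf (Q : Idx) : ℤ := ((Q.2.2 : ℤ))

/-- Kronecker delta for vectors in ℝ², valued in ℂ. -/
def deltaV (x y : ℝ × ℝ) : ℂ := if x = y then 1 else 0

/-- Kronecker delta for lattice indices, valued in ℂ. -/
def deltaI (Q Q' : Idx) : ℂ := if Q = Q' then 1 else 0

/-- The squared Euclidean norm on ℝ². -/
def sqn (p : ℝ × ℝ) : ℝ := p.1 ^ 2 + p.2 ^ 2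

/-- The momentum-space Hamiltonian entry
H_{Q,Q'}(k) = −α‖k+Q‖² δ_{Q,Q'}
  + V ∑ᵢ (e^{iψζ_Q} δ_{Q−Q', bᵢ} + e^{−iψζ_Q} δ_{Q−Q', −bᵢ})
  + w ∑ᵢ (δ_{Q−Q', qᵢ} + δ_{Q−Q', −qᵢ}). -/
def Hent (kθ α V w ψ : ℝ) (Q Q' : Idx) (k : ℝ × ℝ) : ℂ :=
  (-(α * sqn (k + vecOf kθ Q)) : ℝ) * deltaI Q Q'
  + (V : ℝ) * ∑ i : Fin 3,
      (Complex.exp (Complex.I * ((ψ * (zetaOf Q : ℝ)) : ℝ))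
          * deltaV (vecOf kθ Q - vecOf kθ Q') (bv kθ i)
        + Complex.exp (-(Complex.I * ((ψ * (zetaOf Q : ℝ)) : ℝ)))
          * deltaV (vecOf kθ Q - vecOf kθ Q') (-bv kθ i))
  + (w : ℝ) * ∑ i : Fin 3,
      (deltaV (vecOf kθ Q - vecOf kθ Q') (qv kθ i)
        + deltaV (vecOf kθ Q - vecOf kθ Q') (-qv kθ i))

end

/-- Rotation of ℝ² by angle 2π/3. -/
noncomputable def rot3 (p : ℝ × ℝ) : ℝ × ℝ :=
  (-(1 / 2) * p.1 - (Real.sqrt 3 / 2) * p.2, (Real.sqrt 3 / 2) * p.1 - (1 / 2) * p.2)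

/-- The C₃z index map: ρ(m,n,+1) = (−n−1, m−n, +1), ρ(m,n,−1) = (−n, m−n+1, −1). -/
def rhoIdx (Q : Idx) : Idx :=
  if Q.2.2 = 1 then (-Q.2.1 - 1, Q.1 - Q.2.1, Q.2.2) else (-Q.2.1, Q.1 - Q.2.1 + 1, Q.2.2)

private lemma s3 : Real.sqrt 3 * Real.sqrt 3 = 3 := Real.mul_self_sqrt (by norm_num)

private lemma s3inv : (Real.sqrt 3)⁻¹ = Real.sqrt 3 / 3 := by
  rw [eq_div_iff (by norm_num : (3:ℝ) ≠ 0), inv_mul_eq_div,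
    div_eq_iff (by positivity : Real.sqrt 3 ≠ 0)]
  linear_combination (-1 : ℝ) * s3

private lemma rot3_add (p q : ℝ × ℝ) : rot3 (p + q) = rot3 p + rot3 q := by
  simp only [rot3, Prod.ext_iff, Prod.fst_add, Prod.snd_add]
  constructor <;> ring

private lemma rot3_sub (p q : ℝ × ℝ) : rot3 (p - q) = rot3 p - rot3 q := by
  simp only [rot3, Prod.ext_iff, Prod.fst_sub, Prod.snd_sub]
  constructor <;> ring

private lemma rot3_neg (p : ℝ × ℝ) : rot3 (-p) = -rot3 p := by
  simp only [rot3, Prod.ext_iff, Prod.fst_neg, Prod.snd_neg]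
  constructor <;> ring

private lemma rot3_three (p : ℝ × ℝ) : rot3 (rot3 (rot3 p)) = p := by
  simp only [rot3, Prod.ext_iff]
  constructor
  · linear_combination ((3/8)*p.1 + (1/8)*Real.sqrt 3 * p.2) * s3
  · linear_combination ((3/8)*p.2 - (1/8)*Real.sqrt 3 * p.1) * s3

private lemma rot3_inj : Function.Injective rot3 := by
  intro a b h
  rw [← rot3_three a, h, rot3_three]

private lemma sqn_rot3 (p : ℝ × ℝ) : sqn (rot3 p) = sqn p := by
  simp only [sqn, rot3]
  linear_combination ((1/4)*p.1^2 + (1/4)*p.2^2) * s3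

private lemma deltaV_rot (x y : ℝ × ℝ) : deltaV (rot3 x) (rot3 y) = deltaV x y := by
  unfold deltaV
  by_cases h : x = y
  · simp [h]
  · rw [if_neg (fun hc => h (rot3_inj hc)), if_neg h]

private lemma rot3_bv0 (kθ : ℝ) : rot3 (bv kθ 0) = bv kθ 1 := by
  simp only [rot3, bv, Prod.ext_iff]; constructor <;> ring

private lemma rot3_bv1 (kθ : ℝ) : rot3 (bv kθ 1) = bv kθ 2 := by
  simp only [rot3, bv, Prod.ext_iff]
  constructor
  · linear_combination (-(kθ/4)) * s3
  · ring

private lemma rot3_bv2 (kθ : ℝ) : rot3 (bv kθ 2) = bv kθ 0 := by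
  simp only [rot3, bv, Prod.ext_iff]
  constructor
  · linear_combination (kθ/4) * s3
  · ring

private lemma rot3_qv0 (kθ : ℝ) : rot3 (qv kθ 0) = qv kθ 1 := by
  simp only [rot3, qv, Prod.ext_iff, div_eq_mul_inv, mul_inv, s3inv]
  constructor
  · linear_combination (-(kθ/6)) * s3
  · ring

private lemma rot3_qv1 (kθ : ℝ) : rot3 (qv kθ 1) = qv kθ 2 := by
  simp only [rot3, qv, Prod.ext_iff, div_eq_mul_inv, mul_inv, s3inv]
  constructor
  · linear_combination (kθ/12) * s3
  · ring

private lemma rot3_qv2 (kθ : ℝ) : rot3 (qv kθ 2) = qv kθ 0 := by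
  simp only [rot3, qv, Prod.ext_iff, div_eq_mul_inv, mul_inv, s3inv]
  constructor
  · linear_combination (kθ/12) * s3
  · ring

private lemma rhoIdx_inj : Function.Injective rhoIdx := by
  rintro ⟨m, n, l⟩ ⟨m', n', l'⟩ h
  rcases Int.units_eq_one_or l with rfl | rfl <;>
    rcases Int.units_eq_one_or l' with rfl | rfl <;>
    simp [rhoIdx, Prod.ext_iff] at h ⊢ <;> omega

private lemma deltaI_rho (Q Q' : Idx) : deltaI (rhoIdx Q) (rhoIdx Q') = deltaI Q Q' := by
  unfold deltaI
  by_cases h : Q = Q'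
  · simp [h]
  · rw [if_neg (fun hc => h (rhoIdx_inj hc)), if_neg h]

private lemma zeta_rho (Q : Idx) : zetaOf (rhoIdx Q) = zetaOf Q := by
  unfold zetaOf rhoIdx
  split <;> rfl

private lemma vec_rho (kθ : ℝ) (Q : Idx) : vecOf kθ (rhoIdx Q) = rot3 (vecOf kθ Q) := by
  obtain ⟨m, n, l⟩ := Q
  rcases Int.units_eq_one_or l with rfl | rfl <;>
    simp only [vecOf, rhoIdx, rot3, bv, kappa, Prod.ext_iff, Prod.smul_mk, smul_eq_mul,
      Prod.mk_add_mk, Units.val_one, Units.val_neg, Int.cast_one, Int.cast_neg,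
      if_true, Int.cast_sub, Int.cast_add, Int.cast_mul, div_eq_mul_inv, mul_inv, s3inv,
      Int.reduceNeg]
  · constructor
    · push_cast
      linear_combination ((n : ℝ) * kθ / 4 + kθ / 12) * s3
    · push_cast; ring
  · rw [if_neg (by decide)]
    constructor
    · push_cast
      linear_combination ((n : ℝ) * kθ / 4 - kθ / 12) * s3
    · push_cast; ring

/-- C₃z covariance of the momentum-space Hamiltonian: (i) the vector associated to ρ(Q)
is R applied to the vector of Q (with R κ₊ = κ₊ − b₁ and R κ₋ = κ₋ + b₂);
(ii) H_{ρQ,ρQ'}(R k) = H_{Q,Q'}(k). -/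
theorem momentum_hamiltonian_C3z_covariant
    (kθ α V w ψ : ℝ) (hkθ : 0 < kθ) (hα : 0 < α) :
    (∀ Q : Idx, vecOf kθ (rhoIdx Q) = rot3 (vecOf kθ Q)) ∧
    rot3 (kappa kθ 1) = kappa kθ 1 - bv kθ 0 ∧
    rot3 (kappa kθ (-1)) = kappa kθ (-1) + bv kθ 1 ∧
    (∀ (Q Q' : Idx) (k : ℝ × ℝ),
      Hent kθ α V w ψ (rhoIdx Q) (rhoIdx Q') (rot3 k) = Hent kθ α V w ψ Q Q' k) := by
  refine ⟨vec_rho kθ, ?_, ?_, ?_⟩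
  · simp only [rot3, kappa, bv, Prod.ext_iff, Prod.fst_sub, Prod.snd_sub, Units.val_one,
      Int.cast_one, div_eq_mul_inv, mul_inv, s3inv]
    constructor
    · linear_combination (-(kθ/12)) * s3
    · ring
  · simp only [rot3, kappa, bv, Prod.ext_iff, Prod.fst_add, Prod.snd_add, Units.val_neg,
      Units.val_one, Int.cast_neg, Int.cast_one, div_eq_mul_inv, mul_inv, s3inv]
    constructor
    · linear_combination (kθ/12) * s3
    · ring
  · intro Q Q' k
    unfold Hent
    rw [vec_rho, vec_rho, ← rot3_add, sqn_rot3, deltaI_rho, zeta_rho, ← rot3_sub]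
    set d := vecOf kθ Q - vecOf kθ Q' with hd
    have hb0 : deltaV (rot3 d) (bv kθ 0) = deltaV d (bv kθ 2) := by
      rw [← rot3_bv2, deltaV_rot]
    have hb1 : deltaV (rot3 d) (bv kθ 1) = deltaV d (bv kθ 0) := by
      rw [← rot3_bv0, deltaV_rot]
    have hb2 : deltaV (rot3 d) (bv kθ 2) = deltaV d (bv kθ 1) := by
      rw [← rot3_bv1, deltaV_rot]
    have hnb0 : deltaV (rot3 d) (-bv kθ 0) = deltaV d (-bv kθ 2) := by
      rw [← rot3_bv2, ← rot3_neg, deltaV_rot]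
    have hnb1 : deltaV (rot3 d) (-bv kθ 1) = deltaV d (-bv kθ 0) := by
      rw [← rot3_bv0, ← rot3_neg, deltaV_rot]
    have hnb2 : deltaV (rot3 d) (-bv kθ 2) = deltaV d (-bv kθ 1) := by
      rw [← rot3_bv1, ← rot3_neg, deltaV_rot]
    have hq0 : deltaV (rot3 d) (qv kθ 0) = deltaV d (qv kθ 2) := by
      rw [← rot3_qv2, deltaV_rot]
    have hq1 : deltaV (rot3 d) (qv kθ 1) = deltaV d (qv kθ 0) := by
      rw [← rot3_qv0, deltaV_rot]
    have hq2 : deltaV (rot3 d) (qv kθ 2) = deltaV d (qv kθ 1) := by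
      rw [← rot3_qv1, deltaV_rot]
    have hnq0 : deltaV (rot3 d) (-qv kθ 0) = deltaV d (-qv kθ 2) := by
      rw [← rot3_qv2, ← rot3_neg, deltaV_rot]
    have hnq1 : deltaV (rot3 d) (-qv kθ 1) = deltaV d (-qv kθ 0) := by
      rw [← rot3_qv0, ← rot3_neg, deltaV_rot]
    have hnq2 : deltaV (rot3 d) (-qv kθ 2) = deltaV d (-qv kθ 1) := by
      rw [← rot3_qv1, ← rot3_neg, deltaV_rot]
    rw [Fin.sum_univ_three, Fin.sum_univ_three, Fin.sum_univ_three, Fin.sum_univ_three,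
      hb0, hb1, hb2, hnb0, hnb1, hnb2, hq0, hq1, hq2, hnq0, hnq1, hnq2]
    ring
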